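/- arXiv:1308.5459 — 2 statements merged into one kernel-verified Lean document; each statement's English description precedes it below -/
import Mathlib

section
/- Let n = 2m and let η be a fixed-point-free involution of [n] (a product of m disjoint 2-cycles). If U is uniform on the conjugacy class of η (i.e., uniform over fixed-point-free involutions), then M = (1/2)·#{i ∈ [n] : U(i) = η(i)} satisfies, for every k ≥ 1, E[M(M-1)···(M-k+1)] = m(m-1)···(m-k+1) / ((2m-1)(2m-3)···(2m-2k+1)). -/
/-!
The agreement set of a fixed-point-free involution `U` with `η` is `η`-invariant, so it has even
size `2 M_U`, and `2 (M_U)_{k+1} = 2 M_U (M_U - 1)_k`. Double counting pairs `(U, i)` with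
`U i = η i` therefore gives `2 ∑_U (M_U)_{k+1} = ∑_i ∑_{U i = η i} (M_U - 1)_k`. The
involutions with `U i = η i` are exactly `(i η(i)) · V` for `V` a fixed-point-free involution of
the other `2m - 2` points, and then `M_U - 1` is the agreement count of `V` with the restriction
of `η`. Induction on `k` yields `∑_U (M_U)_k · ∏_{j<k} (2m - 2j - 1) = (m)_k (2m - 1)‼`, and the
same decomposition counts `(2m - 1)‼` fixed-point-free involutions.
-/

open Finset Equiv Equiv.Perm
open scoped Nat

theorem Nat.two_mul_descFactorial_half_succ {n : ℕ} (hn : Even n) (k : ℕ) :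
    2 * (n / 2).descFactorial (k + 1) = n * (n / 2 - 1).descFactorial k := by
  obtain ⟨r, rfl⟩ := hn
  rcases r with _ | r
  · simp
  · rw [show (r + 1 + (r + 1)) / 2 = r + 1 by omega, Nat.succ_descFactorial_succ,
      Nat.add_sub_cancel]
    ring

theorem Nat.cast_descFactorial_eq_prod_range (n k : ℕ) :
    (n.descFactorial k : ℚ) = ∏ j ∈ range k, ((n : ℚ) - j) := by
  rw [← descPochhammer_eval_eq_descFactorial, descPochhammer_eval_eq_prod_range]

def fixedPointFreeInvolutions (α : Type*) [Fintype α] [DecidableEq α] : Finset (Perm α) :=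
  univ.filter fun U => U * U = 1 ∧ ∀ i, U i ≠ i

section

variable {α : Type*}

theorem apply_apply_of_mul_self_eq_one {U : Perm α} (hU : U * U = 1) (x : α) : U (U x) = x := by
  rw [← Perm.mul_apply, hU, Perm.one_apply]

theorem apply_eq_iff_eq_apply_of_mul_self_eq_one {U : Perm α} (hU : U * U = 1) {x y : α} :
    U x = y ↔ x = U y :=
  ⟨fun h => by rw [← h, apply_apply_of_mul_self_eq_one hU],
    fun h => by rw [h, apply_apply_of_mul_self_eq_one hU]⟩

section Pair

variable {a b : α}

theorem apply_ne_and_ne_iff {U : Perm α} (hU : U * U = 1) (hUa : U a = b) (x : α) :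
    U x ≠ a ∧ U x ≠ b ↔ x ≠ a ∧ x ≠ b := by
  have hUb : U b = a := by rw [← hUa, apply_apply_of_mul_self_eq_one hU]
  simp only [ne_eq, apply_eq_iff_eq_apply_of_mul_self_eq_one hU, hUa, hUb]
  exact and_comm

def restrictPair (U : Perm α) (hU : U * U = 1) (hUa : U a = b) :
    Perm {x : α // x ≠ a ∧ x ≠ b} :=
  U.subtypePerm (p := fun x => x ≠ a ∧ x ≠ b) (apply_ne_and_ne_iff hU hUa)

@[simp]
theorem restrictPair_apply_coe {U : Perm α} (hU : U * U = 1) (hUa : U a = b)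
    (x : {x : α // x ≠ a ∧ x ≠ b}) : (restrictPair U hU hUa x : α) = U x :=
  rfl

variable [DecidableEq α]

def extendWithSwap (a b : α) (V : Perm {x : α // x ≠ a ∧ x ≠ b}) : Perm α :=
  swap a b * ofSubtype V

section extendWithSwap

variable (V : Perm {x : α // x ≠ a ∧ x ≠ b})

@[simp]
theorem extendWithSwap_apply_left : extendWithSwap a b V a = b := by
  simp [extendWithSwap, ofSubtype_apply_of_not_mem]

@[simp]
theorem extendWithSwap_apply_right : extendWithSwap a b V b = a := by
  simp [extendWithSwap, ofSubtype_apply_of_not_mem]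

@[simp]
theorem extendWithSwap_apply_coe (x : {x : α // x ≠ a ∧ x ≠ b}) :
    extendWithSwap a b V x = V x := by
  rw [extendWithSwap, Perm.mul_apply, ofSubtype_apply_coe,
    swap_apply_of_ne_of_ne (V x).2.1 (V x).2.2]

theorem restrictPair_extendWithSwap (hV : extendWithSwap a b V * extendWithSwap a b V = 1)
    (hVa : extendWithSwap a b V a = b) : restrictPair (extendWithSwap a b V) hV hVa = V := by
  ext x
  simp

end extendWithSwap

theorem extendWithSwap_restrictPair {U : Perm α} (hU : U * U = 1) (hUa : U a = b) :
    extendWithSwap a b (restrictPair U hU hUa) = U := by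
  ext x
  by_cases hx : x ≠ a ∧ x ≠ b
  · lift x to {x : α // x ≠ a ∧ x ≠ b} using hx
    simp
  · obtain rfl | rfl : x = a ∨ x = b := by tauto
    · simp [hUa]
    · rw [extendWithSwap_apply_right]
      exact (apply_eq_iff_eq_apply_of_mul_self_eq_one hU).1 hUa

end Pair

variable [DecidableEq α] [Fintype α]

@[simp]
theorem mem_fixedPointFreeInvolutions {U : Perm α} :
    U ∈ fixedPointFreeInvolutions α ↔ U * U = 1 ∧ ∀ i, U i ≠ i := by
  simp [fixedPointFreeInvolutions]

def agreements (σ τ : Perm α) : ℕ := #(univ.filter fun i => σ i = τ i)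

theorem even_card_of_mul_self_eq_one {σ : Perm α} (hσ : σ * σ = 1) (hfree : ∀ x, σ x ≠ x) :
    Even (Fintype.card α) := by
  have hmod := card_compl_support_modEq (p := 2) (n := 1) (σ := σ) (by rwa [pow_one, sq])
  have hsupp : σ.supportᶜ = ∅ := by simpa [Finset.eq_empty_iff_forall_notMem] using hfree
  rw [hsupp, card_empty] at hmod
  exact Nat.even_iff.2 hmod.symm

theorem even_agreements {U η : Perm α} (hU : U * U = 1)
    (hη : η ∈ fixedPointFreeInvolutions α) : Even (agreements U η) := by
  obtain ⟨hη1, hη2⟩ := mem_fixedPointFreeInvolutions.1 hη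
  have hpres : ∀ x, U (η x) = η (η x) ↔ U x = η x := fun x => by
    rw [apply_apply_of_mul_self_eq_one hη1, apply_eq_iff_eq_apply_of_mul_self_eq_one hU, eq_comm]
  let σ := η.subtypePerm (p := fun x => U x = η x) hpres
  have hσ : σ * σ = 1 := by ext x; simp [σ, apply_apply_of_mul_self_eq_one hη1]
  have := even_card_of_mul_self_eq_one hσ fun x h => hη2 x (congrArg Subtype.val h)
  rwa [Fintype.card_subtype] at this

theorem card_subtype_ne_and_ne {a b : α} (hab : a ≠ b) :
    Fintype.card {x : α // x ≠ a ∧ x ≠ b} = Fintype.card α - 2 := by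
  have : univ.filter (fun x : α => x ≠ a ∧ x ≠ b) = {a, b}ᶜ := by ext; simp
  rw [Fintype.card_subtype, this, card_compl, card_pair hab]

section Pair

variable {a b : α}

theorem extendWithSwap_mem (hab : a ≠ b) {V : Perm {x : α // x ≠ a ∧ x ≠ b}}
    (hV : V ∈ fixedPointFreeInvolutions _) :
    extendWithSwap a b V ∈ fixedPointFreeInvolutions α := by
  obtain ⟨hV1, hV2⟩ := mem_fixedPointFreeInvolutions.1 hV
  have key : ∀ x, extendWithSwap a b V (extendWithSwap a b V x) = x ∧
      extendWithSwap a b V x ≠ x := by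
    intro x
    by_cases hx : x ≠ a ∧ x ≠ b
    · lift x to {x : α // x ≠ a ∧ x ≠ b} using hx
      simp [apply_apply_of_mul_self_eq_one hV1, ← Subtype.ext_iff, hV2]
    · obtain rfl | rfl : x = a ∨ x = b := by tauto
      · simp [hab.symm]
      · simp [hab]
  exact mem_fixedPointFreeInvolutions.2 ⟨Perm.ext fun x => (key x).1, fun x => (key x).2⟩

theorem restrictPair_mem {U : Perm α} (hU : U ∈ fixedPointFreeInvolutions α) (hUa : U a = b) :
    restrictPair U (mem_fixedPointFreeInvolutions.1 hU).1 hUa ∈ fixedPointFreeInvolutions _ := by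
  obtain ⟨hU1, hU2⟩ := mem_fixedPointFreeInvolutions.1 hU
  refine mem_fixedPointFreeInvolutions.2 ⟨?_, fun x h => hU2 x (congrArg Subtype.val h)⟩
  ext x
  simp [apply_apply_of_mul_self_eq_one hU1]

theorem sum_filter_apply_eq_eq_sum_extendWithSwap {M : Type*} [AddCommMonoid M] (hab : a ≠ b)
    (f : Perm α → M) :
    ∑ U ∈ (fixedPointFreeInvolutions α).filter (fun U => U a = b), f U =
      ∑ V ∈ fixedPointFreeInvolutions {x : α // x ≠ a ∧ x ≠ b}, f (extendWithSwap a b V) := by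
  have hU : ∀ {U}, U ∈ (fixedPointFreeInvolutions α).filter (fun U => U a = b) →
      U ∈ fixedPointFreeInvolutions α ∧ U a = b := mem_filter.1
  refine sum_bij'
    (fun U h => restrictPair U (mem_fixedPointFreeInvolutions.1 (hU h).1).1 (hU h).2)
    (fun V _ => extendWithSwap a b V) (fun U h => restrictPair_mem (hU h).1 (hU h).2)
    (fun V hV => mem_filter.2 ⟨extendWithSwap_mem hab hV, extendWithSwap_apply_left V⟩)
    (fun U h => extendWithSwap_restrictPair _ _) (fun V _ => restrictPair_extendWithSwap V _ _)
    fun U h => by rw [extendWithSwap_restrictPair]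

theorem agreements_extendWithSwap {η : Perm α} (hη : η * η = 1) (hηa : η a = b) (hab : a ≠ b)
    (V : Perm {x : α // x ≠ a ∧ x ≠ b}) :
    agreements (extendWithSwap a b V) η = agreements V (restrictPair η hη hηa) + 2 := by
  have hηb : η b = a := (apply_eq_iff_eq_apply_of_mul_self_eq_one hη).2 hηa.symm
  have hcompl : ∀ x, x ∈ ({a, b} : Finset α)ᶜ ↔ x ≠ a ∧ x ≠ b := fun x => by simp
  simp only [agreements, card_filter]
  rw [← sum_add_sum_compl {a, b}, sum_pair hab, sum_subtype (F := inferInstance) _ hcompl,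
    add_comm]
  simp [hηa, hηb, Subtype.ext_iff]

end Pair

theorem card_fixedPointFreeInvolutions {m : ℕ} (hα : Fintype.card α = 2 * m) :
    #(fixedPointFreeInvolutions α) = (2 * m - 1)‼ := by
  induction m generalizing α with
  | zero =>
    have : IsEmpty α := Fintype.card_eq_zero_iff.1 hα
    have : fixedPointFreeInvolutions α = {1} :=
      eq_singleton_iff_unique_mem.2 ⟨by simp, fun U _ => Subsingleton.elim U 1⟩
    simp [this]
  | succ m ih =>
    obtain ⟨a⟩ : Nonempty α := Fintype.card_pos_iff.1 (by omega)
    have hfiber : ∀ b ∈ univ.erase a,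
        #((fixedPointFreeInvolutions α).filter (fun U => U a = b)) = (2 * m - 1)‼ := by
      intro b hb
      have hab : a ≠ b := (ne_of_mem_erase hb).symm
      rw [card_eq_sum_ones, sum_filter_apply_eq_eq_sum_extendWithSwap hab, ← card_eq_sum_ones]
      exact ih (by rw [card_subtype_ne_and_ne hab, hα]; omega)
    rw [card_eq_sum_card_fiberwise (f := fun U => U a) (t := univ.erase a)
        fun U hU => mem_erase.2 ⟨(mem_fixedPointFreeInvolutions.1 hU).2 a, mem_univ _⟩,
      sum_congr rfl hfiber, sum_const, card_erase_of_mem (mem_univ a), card_univ, hα,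
      smul_eq_mul, show 2 * (m + 1) - 1 = 2 * m + 1 by omega, Nat.doubleFactorial_add_one]

theorem sum_agreements_mul {R : Type*} [NonAssocSemiring R] (S : Finset (Perm α)) (η : Perm α)
    (g : Perm α → R) :
    ∑ U ∈ S, (agreements U η : R) * g U = ∑ i, ∑ U ∈ S.filter (fun U => U i = η i), g U := by
  simp only [agreements, card_filter, Nat.cast_sum, sum_mul, sum_filter]
  rw [sum_comm]
  simp

theorem two_mul_sum_descFactorial_succ {η : Perm α} (hη : η ∈ fixedPointFreeInvolutions α)
    (k : ℕ) :
    2 * ∑ U ∈ fixedPointFreeInvolutions α, (agreements U η / 2).descFactorial (k + 1) =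
      ∑ i, ∑ V ∈ fixedPointFreeInvolutions {x : α // x ≠ i ∧ x ≠ η i},
        (agreements V (restrictPair η (mem_fixedPointFreeInvolutions.1 hη).1 rfl) / 2
          ).descFactorial k := by
  obtain ⟨hη1, hη2⟩ := mem_fixedPointFreeInvolutions.1 hη
  calc 2 * ∑ U ∈ fixedPointFreeInvolutions α, (agreements U η / 2).descFactorial (k + 1)
      = ∑ U ∈ fixedPointFreeInvolutions α,
          agreements U η * (agreements U η / 2 - 1).descFactorial k := by
        rw [mul_sum]
        exact sum_congr rfl fun U hU => Nat.two_mul_descFactorial_half_succ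
          (even_agreements (mem_fixedPointFreeInvolutions.1 hU).1 hη) k
    _ = ∑ i, ∑ U ∈ (fixedPointFreeInvolutions α).filter (fun U => U i = η i),
          (agreements U η / 2 - 1).descFactorial k := by
        simpa only [Nat.cast_id] using sum_agreements_mul (R := ℕ) _ η _
    _ = _ := by
        refine sum_congr rfl fun i _ => ?_
        rw [sum_filter_apply_eq_eq_sum_extendWithSwap (hη2 i).symm]
        refine sum_congr rfl fun V _ => ?_
        rw [agreements_extendWithSwap hη1 rfl (hη2 i).symm]
        congr 1
        omega

theorem sum_descFactorial_agreements_mul_prod (k : ℕ) {m : ℕ} (hα : Fintype.card α = 2 * m)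
    {η : Perm α} (hη : η ∈ fixedPointFreeInvolutions α) :
    ((∑ U ∈ fixedPointFreeInvolutions α, (agreements U η / 2).descFactorial k : ℕ) : ℚ) *
        ∏ j ∈ range k, (2 * m - (2 * j + 1) : ℚ) =
      m.descFactorial k * (2 * m - 1)‼ := by
  induction k generalizing α m with
  | zero => simp [card_fixedPointFreeInvolutions hα]
  | succ k ih =>
    rcases m with _ | m
    · have : IsEmpty α := Fintype.card_eq_zero_iff.1 hα
      simp [agreements]
    have hη2 := (mem_fixedPointFreeInvolutions.1 hη).2
    have hsub : ∀ i, ((∑ V ∈ fixedPointFreeInvolutions {x : α // x ≠ i ∧ x ≠ η i},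
        (agreements V (restrictPair η (mem_fixedPointFreeInvolutions.1 hη).1 rfl) / 2
          ).descFactorial k : ℕ) : ℚ) * ∏ j ∈ range k, (2 * m - (2 * j + 1) : ℚ) =
        m.descFactorial k * (2 * m - 1)‼ := fun i =>
      ih (by rw [card_subtype_ne_and_ne (hη2 i).symm, hα]; omega) (restrictPair_mem hη rfl)
    have hprod : ∏ j ∈ range (k + 1), (2 * (m + 1 : ℕ) - (2 * j + 1) : ℚ) =
        (2 * m + 1) * ∏ j ∈ range k, (2 * m - (2 * j + 1) : ℚ) := by
      rw [prod_range_succ', mul_comm]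
      push_cast
      congr 1
      · ring
      · exact prod_congr rfl fun j _ => by ring
    have hsum := congr(($(two_mul_sum_descFactorial_succ hη k) : ℚ) *
      ∏ j ∈ range k, (2 * m - (2 * j + 1) : ℚ))
    rw [Nat.cast_sum, sum_mul, sum_congr rfl fun i _ => hsub i, sum_const, card_univ, hα] at hsum
    rw [hprod, Nat.succ_descFactorial_succ, show 2 * (m + 1) - 1 = 2 * m + 1 by omega,
      Nat.doubleFactorial_add_one]
    push_cast at hsum ⊢
    linear_combination ((2 * m + 1) / 2 : ℚ) * hsum

end

theorem stmt18_general (m k : ℕ) (η : Equiv.Perm (Fin (2 * m)))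
    (hη1 : η * η = 1) (hη2 : ∀ i, η i ≠ i) :
    (∑ U ∈ Finset.univ.filter
        (fun U : Equiv.Perm (Fin (2 * m)) => U * U = 1 ∧ ∀ i, U i ≠ i),
        ∏ j ∈ Finset.range k,
          ((((Finset.univ.filter (fun i : Fin (2 * m) => U i = η i)).card / 2 : ℕ) : ℚ) - j))
      / ((Finset.univ.filter
        (fun U : Equiv.Perm (Fin (2 * m)) => U * U = 1 ∧ ∀ i, U i ≠ i)).card : ℚ)
    =
    (∏ j ∈ Finset.range k, ((m : ℚ) - j))
      / (∏ j ∈ Finset.range k, ((2 * m : ℚ) - (2 * j + 1))) := by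
  have hα : Fintype.card (Fin (2 * m)) = 2 * m := Fintype.card_fin _
  have hη : η ∈ fixedPointFreeInvolutions (Fin (2 * m)) :=
    mem_fixedPointFreeInvolutions.2 ⟨hη1, hη2⟩
  have hodd : ∏ j ∈ range k, ((2 * m : ℚ) - (2 * j + 1)) ≠ 0 :=
    prod_ne_zero_iff.2 fun j _ h => by
      have : 2 * m = 2 * j + 1 := by exact_mod_cast sub_eq_zero.1 h
      omega
  have hF : univ.filter (fun U : Perm (Fin (2 * m)) => U * U = 1 ∧ ∀ i, U i ≠ i) =
      fixedPointFreeInvolutions (Fin (2 * m)) := by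
    ext; simp
  rw [hF]
  change (∑ U ∈ fixedPointFreeInvolutions (Fin (2 * m)),
      ∏ j ∈ range k, (((agreements U η / 2 : ℕ) : ℚ) - j)) /
    (#(fixedPointFreeInvolutions (Fin (2 * m))) : ℚ) = _
  simp only [← Nat.cast_descFactorial_eq_prod_range]
  rw [card_fixedPointFreeInvolutions hα, div_eq_div_iff (by positivity) hodd, ← Nat.cast_sum,
    sum_descFactorial_agreements_mul_prod k hα hη]

/-- Let `n = 2m` and let `η` be a fixed-point-free involution of `[n]` (a product of `m`
disjoint `2`-cycles).  If `U` is uniform on the conjugacy class of `η`, i.e. uniform over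
the fixed-point-free involutions, then `M = (1/2)·#{i ∈ [n] : U(i) = η(i)}` satisfies,
for every `k ≥ 1`,
`E[M(M-1)⋯(M-k+1)] = m(m-1)⋯(m-k+1) / ((2m-1)(2m-3)⋯(2m-2k+1))`. -/
theorem stmt18 (m k : ℕ) (hk : 1 ≤ k) (η : Equiv.Perm (Fin (2 * m)))
    (hη1 : η * η = 1) (hη2 : ∀ i, η i ≠ i) :
    (∑ U ∈ Finset.univ.filter
        (fun U : Equiv.Perm (Fin (2 * m)) => U * U = 1 ∧ ∀ i, U i ≠ i),
        ∏ j ∈ Finset.range k,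
          ((((Finset.univ.filter (fun i : Fin (2 * m) => U i = η i)).card / 2 : ℕ) : ℚ) - j))
      / ((Finset.univ.filter
        (fun U : Equiv.Perm (Fin (2 * m)) => U * U = 1 ∧ ∀ i, U i ≠ i)).card : ℚ)
    =
    (∏ j ∈ Finset.range k, ((m : ℚ) - j))
      / (∏ j ∈ Finset.range k, ((2 * m : ℚ) - (2 * j + 1))) :=
  stmt18_general m k η hη1 hη2
end

section
/- For a uniform random permutation Π of [n], the number of k ∈ [n-1] with Π(k+1) = Π(k)+1 has expectation (n-1)·(1/n) = (n-1)/n, and in particular the probability it is zero is Σ_{k=0}^{n}(-1)^k/k! + (1/n)·Σ_{k=0}^{n-1}(-1)^k/k!. -/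
/-- The successor `k+1 mod n`, taking values in `Fin n`. -/
def cyclicSucc {n : ℕ} (j : Fin n) : Fin n := ⟨((j : ℕ) + 1) % n, Nat.mod_lt _ j.pos⟩

open Finset Equiv

def constrSet (n : ℕ) (S : Finset ℕ) : Finset (Equiv.Perm (Fin n)) :=
  Finset.univ.filter (fun π => ∀ k ∈ S, ∀ hk : k + 1 < n,
    (π ⟨k+1, hk⟩ : ℕ) = (π ⟨k, Nat.lt_of_succ_lt hk⟩ : ℕ) + 1)

def dVal (a v : ℕ) : ℕ := if v ≤ a then v else v - 1
def uVal (b v : ℕ) : ℕ := if v ≤ b then v else v + 1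

lemma dVal_lt {a v m : ℕ} (ha : a < m) (hv : v ≤ m) : dVal a v < m := by
  unfold dVal; split_ifs <;> omega
lemma dVal_inj {a v w : ℕ} (hv : v ≠ a+1) (hw : w ≠ a+1) (h : dVal a v = dVal a w) : v = w := by
  unfold dVal at h; split_ifs at h <;> omega
lemma uVal_ne {b v : ℕ} : uVal b v ≠ b+1 := by unfold uVal; split_ifs <;> omega
lemma dVal_uVal {b v : ℕ} : dVal b (uVal b v) = v := by unfold dVal uVal; split_ifs <;> omega
lemma uVal_dVal {a v : ℕ} (hne : v ≠ a+1) : uVal a (dVal a v) = v := by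
  unfold dVal uVal; split_ifs <;> omega
lemma uVal_succ {b v : ℕ} (h : v ≠ b) : uVal b (v+1) = uVal b v + 1 := by
  unfold uVal; split_ifs <;> omega
lemma dVal_succ {a v : ℕ} (h : v ≠ a) : dVal a (v+1) = dVal a v + 1 := by
  unfold dVal; split_ifs <;> omega
lemma uVal_inj {b v w : ℕ} (h : uVal b v = uVal b w) : v = w := by
  unfold uVal at h; split_ifs at h <;> omega
lemma uVal_lt {b v m : ℕ} (hb : b < m) (hv : v < m) : uVal b v < m + 1 := by
  unfold uVal; split_ifs <;> omega

def eFun (m k : ℕ) (j : Fin m) : Fin (m+1) :=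
  if (j:ℕ) ≤ k then j.castSucc else j.succ

lemma eFun_val_le (m k : ℕ) (j : Fin m) (h : (j:ℕ) ≤ k) : ((eFun m k j : Fin (m+1)) : ℕ) = j := by
  simp [eFun, h]
lemma eFun_val_gt (m k : ℕ) (j : Fin m) (h : ¬ (j:ℕ) ≤ k) : ((eFun m k j : Fin (m+1)) : ℕ) = j + 1 := by
  simp [eFun, h]
lemma eFun_ne (m k : ℕ) (hkm : k < m) (j : Fin m) : eFun m k j ≠ ⟨k+1, by omega⟩ := by
  unfold eFun; split_ifs with h <;> intro hc <;>
    (first | exact absurd (congrArg Fin.val hc) (by simp; omega))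
lemma eFun_inj (m k : ℕ) : Function.Injective (eFun m k) := by
  intro i j h
  unfold eFun at h
  split_ifs at h <;> (apply Fin.ext; have := congrArg Fin.val h; simp at this; omega)

def contractFun (m k : ℕ) (hkm : k < m) (π : Perm (Fin (m+1))) (j : Fin m) : Fin m :=
  ⟨ dVal (π ⟨k, by omega⟩) (π (eFun m k j)) % m, Nat.mod_lt _ (by omega) ⟩

def expandFun (m k : ℕ) (hkm : k < m) (π' : Perm (Fin m)) (j : Fin (m+1)) : Fin (m+1) :=
  if h : (j:ℕ) ≤ k then ⟨uVal (π' ⟨k, hkm⟩) (π' ⟨j, by omega⟩) % (m+1), Nat.mod_lt _ (by omega)⟩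
  else if (j:ℕ) = k+1 then ⟨((π' ⟨k, hkm⟩ : ℕ)+1) % (m+1), Nat.mod_lt _ (by omega)⟩
  else ⟨uVal (π' ⟨k, hkm⟩) (π' ⟨(j:ℕ)-1, by omega⟩) % (m+1), Nat.mod_lt _ (by omega)⟩

noncomputable def contractPerm (m k : ℕ) (hkm : k < m) (π : Perm (Fin (m+1))) : Perm (Fin m) :=
  if h : Function.Injective (contractFun m k hkm π) then
    Equiv.ofBijective _ (Finite.injective_iff_bijective.mp h) else 1

noncomputable def expandPerm (m k : ℕ) (hkm : k < m) (π' : Perm (Fin m)) : Perm (Fin (m+1)) :=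
  if h : Function.Injective (expandFun m k hkm π') then
    Equiv.ofBijective _ (Finite.injective_iff_bijective.mp h) else 1

section
variable {m k : ℕ} (hkm : k < m)

-- facts about a constrained π
variable {π : Perm (Fin (m+1))}

lemma pi_k1_ne (j : Fin m) (hc : (π ⟨k+1, by omega⟩ : ℕ) = (π ⟨k, by omega⟩ : ℕ) + 1)
    (h : (π (eFun m k j) : ℕ) = (π ⟨k, by omega⟩ : ℕ) + 1) : False := by
  have : π (eFun m k j) = π ⟨k+1, by omega⟩ := Fin.ext (by rw [h, hc])
  exact eFun_ne m k hkm j (π.injective this)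

lemma contract_val (hc : (π ⟨k+1, by omega⟩ : ℕ) = (π ⟨k, by omega⟩ : ℕ) + 1) (j : Fin m) :
    ((contractFun m k hkm π j : Fin m) : ℕ)
      = dVal (π ⟨k, by omega⟩) (π (eFun m k j)) := by
  have ha : ((π ⟨k, by omega⟩ : Fin (m+1)) : ℕ) < m := by
    have := (π ⟨k+1, by omega⟩).isLt; omega
  exact Nat.mod_eq_of_lt (dVal_lt ha (Nat.lt_succ_iff.mp (π _).isLt))

lemma contract_inj (hc : (π ⟨k+1, by omega⟩ : ℕ) = (π ⟨k, by omega⟩ : ℕ) + 1) :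
    Function.Injective (contractFun m k hkm π) := by
  intro i j h
  have h2 := congrArg Fin.val h
  rw [contract_val hkm hc, contract_val hkm hc] at h2
  have h3 : ((π (eFun m k i) : Fin (m+1)) : ℕ) = π (eFun m k j) :=
    dVal_inj (fun hh => pi_k1_ne hkm i hc hh) (fun hh => pi_k1_ne hkm j hc hh) h2
  exact eFun_inj m k (π.injective (Fin.ext h3))

lemma contractPerm_val (hc : (π ⟨k+1, by omega⟩ : ℕ) = (π ⟨k, by omega⟩ : ℕ) + 1) (j : Fin m) :
    ((contractPerm m k hkm π j : Fin m) : ℕ)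
      = dVal (π ⟨k, by omega⟩) (π (eFun m k j)) := by
  rw [contractPerm, dif_pos (contract_inj hkm hc)]
  exact contract_val hkm hc j

end

section
variable {m k : ℕ} (hkm : k < m) (π' : Perm (Fin m))

lemma expand_val_le (j : Fin (m+1)) (hj : (j:ℕ) ≤ k) :
    ((expandFun m k hkm π' j : Fin (m+1)) : ℕ) = uVal (π' ⟨k, hkm⟩) (π' ⟨j, by omega⟩) := by
  rw [expandFun, dif_pos hj]
  exact Nat.mod_eq_of_lt (uVal_lt (π' ⟨k,hkm⟩).isLt (π' _).isLt)

lemma expand_val_eq (j : Fin (m+1)) (hj : (j:ℕ) = k+1) :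
    ((expandFun m k hkm π' j : Fin (m+1)) : ℕ) = (π' ⟨k, hkm⟩ : ℕ) + 1 := by
  rw [expandFun, dif_neg (by omega), if_pos hj]
  exact Nat.mod_eq_of_lt (by have := (π' ⟨k,hkm⟩).isLt; omega)

lemma expand_val_gt (j : Fin (m+1)) (hj : ¬ (j:ℕ) ≤ k) (hj2 : (j:ℕ) ≠ k+1) :
    ((expandFun m k hkm π' j : Fin (m+1)) : ℕ)
      = uVal (π' ⟨k, hkm⟩) (π' ⟨(j:ℕ)-1, by omega⟩) := by
  rw [expandFun, dif_neg hj, if_neg hj2]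
  exact Nat.mod_eq_of_lt (uVal_lt (π' ⟨k,hkm⟩).isLt (π' _).isLt)

lemma expand_inj : Function.Injective (expandFun m k hkm π') := by
  intro i j h
  have h2 := congrArg Fin.val h
  apply Fin.ext
  rcases Nat.lt_trichotomy (i:ℕ) (k+1) with hi | hi | hi <;>
    rcases Nat.lt_trichotomy (j:ℕ) (k+1) with hj | hj | hj
  · -- both ≤ k
    rw [expand_val_le hkm π' i (by omega), expand_val_le hkm π' j (by omega)] at h2
    have := π'.injective (Fin.ext (uVal_inj h2) : (π' ⟨(i:ℕ), by omega⟩) = π' ⟨(j:ℕ), by omega⟩)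
    have h3 := congrArg Fin.val this; simp at h3; exact h3
  · rw [expand_val_le hkm π' i (by omega), expand_val_eq hkm π' j (by omega)] at h2
    exact absurd h2 uVal_ne
  · rw [expand_val_le hkm π' i (by omega), expand_val_gt hkm π' j (by omega) (by omega)] at h2
    have := congrArg Fin.val (π'.injective (Fin.ext (uVal_inj h2) :
      (π' ⟨(i:ℕ), by omega⟩) = π' ⟨(j:ℕ)-1, by omega⟩))
    simp at this; omega
  · rw [expand_val_eq hkm π' i (by omega), expand_val_le hkm π' j (by omega)] at h2
    exact absurd h2.symm uVal_ne
  · omega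
  · rw [expand_val_eq hkm π' i (by omega), expand_val_gt hkm π' j (by omega) (by omega)] at h2
    exact absurd h2.symm uVal_ne
  · rw [expand_val_gt hkm π' i (by omega) (by omega), expand_val_le hkm π' j (by omega)] at h2
    have := congrArg Fin.val (π'.injective (Fin.ext (uVal_inj h2) :
      (π' ⟨(i:ℕ)-1, by omega⟩) = π' ⟨(j:ℕ), by omega⟩))
    simp at this; omega
  · rw [expand_val_gt hkm π' i (by omega) (by omega), expand_val_eq hkm π' j (by omega)] at h2
    exact absurd h2 uVal_ne
  · rw [expand_val_gt hkm π' i (by omega) (by omega),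
      expand_val_gt hkm π' j (by omega) (by omega)] at h2
    have := congrArg Fin.val (π'.injective (Fin.ext (uVal_inj h2) :
      (π' ⟨(i:ℕ)-1, by omega⟩) = π' ⟨(j:ℕ)-1, by omega⟩))
    simp at this; omega

lemma expandPerm_apply (j : Fin (m+1)) :
    expandPerm m k hkm π' j = expandFun m k hkm π' j := by
  rw [expandPerm, dif_pos (expand_inj hkm π')]; rfl

end

lemma eFun_eq_low {m k : ℕ} {jv : ℕ} (hj : jv < m) (h : jv ≤ k) :
    eFun m k ⟨jv, hj⟩ = ⟨jv, by omega⟩ :=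
  Fin.ext (eFun_val_le m k _ h)

lemma eFun_eq_high {m k : ℕ} {jv : ℕ} (hj : jv < m) (h : ¬ jv ≤ k) :
    eFun m k ⟨jv, hj⟩ = ⟨jv+1, by omega⟩ :=
  Fin.ext (eFun_val_gt m k _ h)

section
variable {m k : ℕ} (hkm : k < m) {π : Perm (Fin (m+1))}

lemma contract_k_val (hc : (π ⟨k+1, by omega⟩ : ℕ) = (π ⟨k, by omega⟩ : ℕ) + 1) :
    ((contractPerm m k hkm π ⟨k, hkm⟩ : Fin m) : ℕ) = (π ⟨k, by omega⟩ : ℕ) := by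
  rw [contractPerm_val hkm hc, eFun_eq_low hkm (le_refl k)]
  unfold dVal; simp

set_option maxHeartbeats 1000000 in
lemma expand_contract (hc : (π ⟨k+1, by omega⟩ : ℕ) = (π ⟨k, by omega⟩ : ℕ) + 1) :
    expandPerm m k hkm (contractPerm m k hkm π) = π := by
  set a : ℕ := (π ⟨k, by omega⟩ : ℕ) with ha_def
  set π' := contractPerm m k hkm π with hπ'
  have hb : ((π' ⟨k, hkm⟩ : Fin m) : ℕ) = a := contract_k_val hkm hc
  have hne : ∀ (x : Fin (m+1)), (x:ℕ) ≠ k+1 → (π x : ℕ) ≠ a + 1 := by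
    intro x hx h
    have : π x = π ⟨k+1, by omega⟩ := Fin.ext (by rw [h, hc])
    exact hx (congrArg Fin.val (π.injective this))
  apply Equiv.ext
  intro j
  rw [expandPerm_apply]
  apply Fin.ext
  rcases Nat.lt_trichotomy (j:ℕ) (k+1) with hj | hj | hj
  · rw [expand_val_le hkm π' j (by omega), hb]
    have : ((π' ⟨(j:ℕ), by omega⟩ : Fin m) : ℕ) = dVal a (π j) := by
      rw [hπ', contractPerm_val hkm hc, eFun_eq_low (by omega) (by omega)]
    -- uVal a (dVal a (π j)) = π j
    have hne2 : (π j : ℕ) ≠ a + 1 := hne j (by omega)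
    calc uVal a ((π' ⟨(j:ℕ), by omega⟩ : Fin m) : ℕ) = uVal a (dVal a (π j)) := by rw [this]
      _ = (π j : ℕ) := uVal_dVal hne2
  · rw [expand_val_eq hkm π' j hj, hb]
    have : j = ⟨k+1, by omega⟩ := Fin.ext hj
    rw [this, hc]
  · rw [expand_val_gt hkm π' j (by omega) (by omega), hb]
    have hj1 : (j:ℕ) - 1 < m := by omega
    have : ((π' ⟨(j:ℕ)-1, hj1⟩ : Fin m) : ℕ) = dVal a (π j) := by
      rw [hπ', contractPerm_val hkm hc, eFun_eq_high hj1 (by omega)]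
      have hpos : (⟨(j:ℕ)-1+1, by omega⟩ : Fin (m+1)) = j := Fin.ext (by simp; omega)
      rw [hpos]
    rw [this]
    exact uVal_dVal (hne j (by omega))

end

section
variable {m k : ℕ} (hkm : k < m) (π' : Perm (Fin m))

lemma expand_k_val : ((expandPerm m k hkm π' ⟨k, by omega⟩ : Fin (m+1)) : ℕ) = (π' ⟨k, hkm⟩ : ℕ) := by
  rw [expandPerm_apply, expand_val_le hkm π' _ (le_refl k)]
  have : (⟨k, by omega⟩ : Fin m) = ⟨k, hkm⟩ := rfl
  unfold uVal; simp

lemma expand_constraint_k :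
    ((expandPerm m k hkm π' ⟨k+1, by omega⟩ : Fin (m+1)) : ℕ)
      = ((expandPerm m k hkm π' ⟨k, by omega⟩ : Fin (m+1)) : ℕ) + 1 := by
  rw [expandPerm_apply, expand_val_eq hkm π' _ (by simp), expand_k_val hkm π']

lemma contract_expand : contractPerm m k hkm (expandPerm m k hkm π') = π' := by
  set Pi := expandPerm m k hkm π' with hPi
  have hc : (Pi ⟨k+1, by omega⟩ : ℕ) = (Pi ⟨k, by omega⟩ : ℕ) + 1 := expand_constraint_k hkm π'
  have ha : (Pi ⟨k, by omega⟩ : ℕ) = (π' ⟨k, hkm⟩ : ℕ) := expand_k_val hkm π'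
  apply Equiv.ext
  intro j
  apply Fin.ext
  rw [contractPerm_val hkm hc, ha]
  by_cases hj : (j:ℕ) ≤ k
  · rw [show eFun m k j = ⟨(j:ℕ), by omega⟩ from Fin.ext (eFun_val_le m k j hj)]
    rw [hPi, expandPerm_apply, expand_val_le hkm π' _ hj]
    rw [show (⟨(j:ℕ), by omega⟩ : Fin m) = j from Fin.ext rfl]
    exact dVal_uVal
  · rw [show eFun m k j = ⟨(j:ℕ)+1, by omega⟩ from Fin.ext (eFun_val_gt m k j hj)]
    rw [hPi, expandPerm_apply, expand_val_gt hkm π' _ (by simp; omega) (by simp; omega)]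
    rw [show (⟨((j:ℕ)+1)-1, by omega⟩ : Fin m) = j from Fin.ext (by simp)]
    exact dVal_uVal

end

lemma mem_constrSet_iff {n : ℕ} {S : Finset ℕ} {π : Perm (Fin n)} :
    π ∈ constrSet n S ↔ ∀ k ∈ S, ∀ hk : k + 1 < n,
      (π ⟨k+1, hk⟩ : ℕ) = (π ⟨k, Nat.lt_of_succ_lt hk⟩ : ℕ) + 1 := by
  simp [constrSet]

set_option maxHeartbeats 1000000 in
lemma contract_mem {m k : ℕ} {S : Finset ℕ} (hkm : k < m) (hkS : k ∈ S)
    (hmax : ∀ j ∈ S, j ≤ k) {π : Perm (Fin (m+1))} (hπ : π ∈ constrSet (m+1) S) :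
    contractPerm m k hkm π ∈ constrSet m (S.erase k) := by
  rw [mem_constrSet_iff] at hπ ⊢
  have hc : (π ⟨k+1, by omega⟩ : ℕ) = (π ⟨k, by omega⟩ : ℕ) + 1 := hπ k hkS (by omega)
  intro j hj hj1
  have hjS : j ∈ S := Finset.mem_of_mem_erase hj
  have hjk : j ≠ k := Finset.ne_of_mem_erase hj
  have hjlt : j < k := lt_of_le_of_ne (hmax j hjS) hjk
  have hcj : (π ⟨j+1, by omega⟩ : ℕ) = (π ⟨j, by omega⟩ : ℕ) + 1 := hπ j hjS (by omega)
  rw [contractPerm_val hkm hc, contractPerm_val hkm hc,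
    eFun_eq_low (by omega : j+1 < m) (by omega), eFun_eq_low (by omega : j < m) (by omega)]
  rw [hcj]
  apply dVal_succ
  intro h
  have : (⟨j, by omega⟩ : Fin (m+1)) = ⟨k, by omega⟩ := π.injective (Fin.ext h)
  exact hjk (congrArg Fin.val this)

set_option maxHeartbeats 1000000 in
lemma expand_mem {m k : ℕ} {S : Finset ℕ} (hkm : k < m) (hkS : k ∈ S)
    (hmax : ∀ j ∈ S, j ≤ k) {π' : Perm (Fin m)} (hπ' : π' ∈ constrSet m (S.erase k)) :
    expandPerm m k hkm π' ∈ constrSet (m+1) S := by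
  rw [mem_constrSet_iff] at hπ' ⊢
  intro j hj hj1
  by_cases hjk : j = k
  · subst hjk
    exact expand_constraint_k hkm π'
  · have hjlt : j < k := lt_of_le_of_ne (hmax j hj) hjk
    have hcj : (π' ⟨j+1, by omega⟩ : ℕ) = (π' ⟨j, by omega⟩ : ℕ) + 1 :=
      hπ' j (Finset.mem_erase.mpr ⟨hjk, hj⟩) (by omega)
    rw [expandPerm_apply, expandPerm_apply,
      expand_val_le hkm π' ⟨j+1, hj1⟩ (by show j+1 ≤ k; omega),
      expand_val_le hkm π' ⟨j, by omega⟩ (by show j ≤ k; omega)]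
    have e1 : (⟨((⟨j+1, hj1⟩ : Fin (m+1)):ℕ), by show j+1 < m; omega⟩ : Fin m) = ⟨j+1, by omega⟩ :=
      Fin.ext rfl
    have e2 : (⟨((⟨j, by omega⟩ : Fin (m+1)):ℕ), by show j < m; omega⟩ : Fin m) = ⟨j, by omega⟩ :=
      Fin.ext rfl
    rw [e1, e2, hcj]
    apply uVal_succ
    intro h
    have : (⟨j, by omega⟩ : Fin m) = ⟨k, hkm⟩ := π'.injective (Fin.ext h)
    exact hjk (congrArg Fin.val this)

set_option maxHeartbeats 1000000 in
lemma constr_card_succ (m k : ℕ) (S : Finset ℕ) (hkm : k < m) (hkS : k ∈ S)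
    (hmax : ∀ j ∈ S, j ≤ k) :
    (constrSet (m+1) S).card = (constrSet m (S.erase k)).card := by
  apply Finset.card_nbij' (contractPerm m k hkm) (expandPerm m k hkm)
  · intro π hπ; exact contract_mem hkm hkS hmax hπ
  · intro π' hπ'; exact expand_mem hkm hkS hmax hπ'
  · intro π hπ
    have hc : (π ⟨k+1, by omega⟩ : ℕ) = (π ⟨k, by omega⟩ : ℕ) + 1 :=
      (mem_constrSet_iff.mp hπ) k hkS (by omega)
    exact expand_contract hkm hc
  · intro π' _; exact contract_expand hkm π'

lemma constr_card : ∀ (s n : ℕ) (S : Finset ℕ), S.card = s → (∀ j ∈ S, j + 1 < n) →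
    (constrSet n S).card = (n - s).factorial := by
  intro s
  induction s with
  | zero =>
    intro n S hcard _
    rw [Finset.card_eq_zero.mp hcard]
    have : constrSet n ∅ = Finset.univ := by
      apply Finset.eq_univ_of_forall
      intro π; rw [mem_constrSet_iff]; simp
    rw [this]
    simp [Finset.card_univ, Fintype.card_perm]
  | succ s ih =>
    intro n S hcard hlt
    have hne : S.Nonempty := Finset.card_pos.mp (by omega)
    set k := S.max' hne with hk
    have hkS : k ∈ S := S.max'_mem hne
    have hmax : ∀ j ∈ S, j ≤ k := fun j hj => S.le_max' j hj
    have hk1 : k + 1 < n := hlt k hkS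
    obtain ⟨m, rfl⟩ : ∃ m, n = m + 1 := ⟨n - 1, by omega⟩
    have hkm : k < m := by omega
    rw [constr_card_succ m k S hkm hkS hmax]
    rw [ih m (S.erase k) (by rw [Finset.card_erase_of_mem hkS, hcard]; rfl)
      (fun j hj => by
        have := hmax j (Finset.mem_of_mem_erase hj)
        have := Finset.ne_of_mem_erase hj
        omega)]
    congr 1
    omega

lemma cyclicSucc_eq {n : ℕ} (k : Fin n) (hk : (k:ℕ)+1 < n) : cyclicSucc k = ⟨(k:ℕ)+1, hk⟩ :=
  Fin.ext (Nat.mod_eq_of_lt hk)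

lemma single_count {n : ℕ} (k : Fin n) (hk : (k:ℕ)+1 < n) :
    (Finset.univ.filter (fun π : Perm (Fin n) =>
      ((π (cyclicSucc k) : ℕ) = (π k : ℕ) + 1))).card = (n-1).factorial := by
  have : Finset.univ.filter (fun π : Perm (Fin n) =>
      ((π (cyclicSucc k) : ℕ) = (π k : ℕ) + 1)) = constrSet n {(k:ℕ)} := by
    apply Finset.filter_congr
    intro π _
    simp only [Finset.mem_singleton, constrSet]
    constructor
    · intro h j hj hj1
      subst hj
      rw [← cyclicSucc_eq k hj1]
      rw [show (⟨(k:ℕ), Nat.lt_of_succ_lt hj1⟩ : Fin n) = k from Fin.ext rfl]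
      exact h
    · intro h
      rw [cyclicSucc_eq k hk]
      have := h (k:ℕ) rfl hk
      rwa [show (⟨(k:ℕ), Nat.lt_of_succ_lt hk⟩ : Fin n) = k from Fin.ext rfl] at this
  rw [this]
  exact constr_card 1 n {(k:ℕ)} (Finset.card_singleton _)
    (fun j hj => by rw [Finset.mem_singleton] at hj; subst hj; exact hk)

lemma part1_sum {n : ℕ} (hn : 1 ≤ n) :
    (∑ π : Perm (Fin n),
        (Finset.univ.filter (fun k : Fin n =>
          (k : ℕ) + 1 < n ∧ ((π (cyclicSucc k) : ℕ) = (π k : ℕ) + 1))).card)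
      = (n-1) * (n-1).factorial := by
  have step1 : ∀ π : Perm (Fin n),
      (Finset.univ.filter (fun k : Fin n =>
        (k : ℕ) + 1 < n ∧ ((π (cyclicSucc k) : ℕ) = (π k : ℕ) + 1))).card
      = ∑ k : Fin n, if ((k : ℕ) + 1 < n ∧ ((π (cyclicSucc k) : ℕ) = (π k : ℕ) + 1)) then 1 else 0 := by
    intro π; rw [Finset.card_filter]
  simp_rw [step1]
  rw [Finset.sum_comm]
  have step2 : ∀ k : Fin n,
      (∑ π : Perm (Fin n), if ((k : ℕ) + 1 < n ∧ ((π (cyclicSucc k) : ℕ) = (π k : ℕ) + 1)) then 1 else 0)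
      = if (k:ℕ) + 1 < n then (n-1).factorial else 0 := by
    intro k
    by_cases hk : (k:ℕ) + 1 < n
    · rw [if_pos hk, ← single_count k hk, Finset.card_filter]
      apply Finset.sum_congr rfl
      intro π _
      simp [hk]
    · rw [if_neg hk]
      apply Finset.sum_eq_zero
      intro π _
      simp [hk]
  simp_rw [step2]
  obtain ⟨m, rfl⟩ : ∃ m, n = m + 1 := ⟨n - 1, by omega⟩
  rw [Fin.sum_univ_eq_sum_range (fun i => if i + 1 < m + 1 then (m+1-1).factorial else 0)]
  rw [Finset.sum_range_succ]
  simp only [Nat.add_sub_cancel]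
  rw [Finset.sum_congr rfl (fun i hi => if_pos (by rw [Finset.mem_range] at hi; omega))]
  simp

section IE
variable (n : ℕ)

def Bset (π : Perm (Fin n)) : Finset ℕ :=
  (Finset.range (n-1)).filter (fun j => ∃ hj : j + 1 < n,
    (π ⟨j+1, hj⟩ : ℕ) = (π ⟨j, Nat.lt_of_succ_lt hj⟩ : ℕ) + 1)

lemma Bset_subset (π : Perm (Fin n)) : Bset n π ⊆ Finset.range (n-1) := Finset.filter_subset _ _

lemma noSucc_filter_eq (hn : 1 ≤ n) :
    (Finset.univ.filter (fun π : Perm (Fin n) =>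
        ∀ k : Fin n, (k : ℕ) + 1 < n → ((π (cyclicSucc k) : ℕ) ≠ (π k : ℕ) + 1)))
    = Finset.univ.filter (fun π : Perm (Fin n) => Bset n π = ∅) := by
  apply Finset.filter_congr
  intro π _
  unfold Bset
  rw [Finset.filter_eq_empty_iff]
  constructor
  · intro h j hj
    rw [Finset.mem_range] at hj
    rintro ⟨hj1, heq⟩
    have hk := h ⟨j, by omega⟩ (by simpa using by omega)
    rw [cyclicSucc_eq ⟨j, by omega⟩ (by simpa using by omega)] at hk
    exact hk heq
  · intro h k hk heq
    have hkr : (k:ℕ) ∈ Finset.range (n-1) := by rw [Finset.mem_range]; omega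
    apply h hkr
    refine ⟨hk, ?_⟩
    rw [← cyclicSucc_eq k hk]
    rw [show (⟨(k:ℕ), Nat.lt_of_succ_lt hk⟩ : Fin n) = k from Fin.ext rfl]
    exact heq

lemma subset_Bset_iff (S : Finset ℕ) (hS : S ⊆ Finset.range (n-1)) (π : Perm (Fin n)) :
    S ⊆ Bset n π ↔ π ∈ constrSet n S := by
  rw [mem_constrSet_iff]
  constructor
  · intro h j hj hj1
    have := h hj
    rw [Bset, Finset.mem_filter] at this
    obtain ⟨-, hj2, heq⟩ := this
    exact heq
  · intro h j hj
    rw [Bset, Finset.mem_filter]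
    have hjr := hS hj
    rw [Finset.mem_range] at hjr
    exact ⟨Finset.mem_range.mpr hjr, ⟨by omega, h j hj (by omega)⟩⟩

lemma noSucc_card (hn : 1 ≤ n) :
    ((Finset.univ.filter (fun π : Perm (Fin n) =>
        ∀ k : Fin n, (k : ℕ) + 1 < n → ((π (cyclicSucc k) : ℕ) ≠ (π k : ℕ) + 1))).card : ℤ)
    = ∑ s ∈ Finset.range n, ((n-1).choose s : ℤ) * ((-1)^s * ((n - s).factorial : ℤ)) := by
  rw [noSucc_filter_eq n hn]
  rw [Finset.card_filter]
  push_cast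
  have e1 : ∀ π : Perm (Fin n), (if Bset n π = ∅ then (1:ℤ) else 0)
      = ∑ S ∈ (Bset n π).powerset, (-1:ℤ)^S.card := by
    intro π; rw [Finset.sum_powerset_neg_one_pow_card]
  simp_rw [e1]
  have e2 : ∀ π : Perm (Fin n), ∑ S ∈ (Bset n π).powerset, (-1:ℤ)^S.card
      = ∑ S ∈ (Finset.range (n-1)).powerset, if S ⊆ Bset n π then (-1:ℤ)^S.card else 0 := by
    intro π
    rw [← Finset.sum_filter]
    congr 1
    ext S
    simp only [Finset.mem_powerset, Finset.mem_filter]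
    constructor
    · intro h; exact ⟨h.trans (Bset_subset n π), h⟩
    · exact fun h => h.2
  simp_rw [e2]
  rw [Finset.sum_comm]
  have e3 : ∀ S ∈ (Finset.range (n-1)).powerset,
      (∑ π : Perm (Fin n), if S ⊆ Bset n π then (-1:ℤ)^S.card else 0)
      = (-1:ℤ)^S.card * ((n - S.card).factorial : ℤ) := by
    intro S hS
    rw [Finset.mem_powerset] at hS
    calc (∑ π : Perm (Fin n), if S ⊆ Bset n π then (-1:ℤ)^S.card else 0)
        = ∑ π ∈ Finset.univ.filter (fun π : Perm (Fin n) => S ⊆ Bset n π), (-1:ℤ)^S.card := by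
          rw [Finset.sum_filter]
      _ = ((Finset.univ.filter (fun π : Perm (Fin n) => S ⊆ Bset n π)).card : ℤ) * (-1:ℤ)^S.card := by
          rw [Finset.sum_const]; push_cast; ring
      _ = (-1:ℤ)^S.card * ((n - S.card).factorial : ℤ) := by
          have : Finset.univ.filter (fun π : Perm (Fin n) => S ⊆ Bset n π) = constrSet n S := by
            apply Finset.filter_congr
            intro π _
            rw [subset_Bset_iff n S hS π]
            simp [constrSet]
          rw [this, constr_card S.card n S rfl (fun j hj => by
            have := hS hj; rw [Finset.mem_range] at this; omega)]
          ring
  rw [Finset.sum_congr rfl e3]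
  rw [Finset.sum_powerset_apply_card (fun j => (-1:ℤ)^j * ((n - j).factorial : ℤ))]
  rw [Finset.card_range]
  rw [show n - 1 + 1 = n by omega]
  apply Finset.sum_congr rfl
  intro s _
  rw [nsmul_eq_mul]

end IE

lemma alg_lemma (m : ℕ) :
    ∑ s ∈ Finset.range (m+1), ((m.choose s : ℚ)) * ((-1)^s * ((m+1-s).factorial : ℚ))
    = ((m+1).factorial : ℚ) * (∑ k ∈ Finset.range (m+1+1), (-1:ℚ)^k / (k.factorial : ℚ))
      + (m.factorial : ℚ) * (∑ k ∈ Finset.range (m+1), (-1:ℚ)^k / (k.factorial : ℚ)) := by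
  have fact_ne : ∀ j : ℕ, ((j.factorial : ℚ)) ≠ 0 := fun j => Nat.cast_ne_zero.mpr j.factorial_ne_zero
  have stepA : ∀ s ∈ Finset.range (m+1),
      ((m.choose s : ℚ)) * ((-1)^s * ((m+1-s).factorial : ℚ))
      = (m.factorial : ℚ) * ((-1)^s * (((m:ℚ)+1-s) / (s.factorial : ℚ))) := by
    intro s hs
    rw [Finset.mem_range] at hs
    have hsm : s ≤ m := by omega
    rw [Nat.cast_choose ℚ hsm]
    have h1 : m + 1 - s = (m - s) + 1 := by omega
    rw [h1, Nat.factorial_succ]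
    have h2 : ((m - s + 1 : ℕ) : ℚ) = (m:ℚ) + 1 - s := by
      push_cast [Nat.cast_sub hsm]; ring
    push_cast
    rw [Nat.cast_sub hsm]
    field_simp
    ring
  rw [Finset.sum_congr rfl stepA]
  -- now compute ∑ (-1)^s * ((m+1-s)/s!)
  have stepB : ∑ s ∈ Finset.range (m+1), (m.factorial : ℚ) * ((-1)^s * (((m:ℚ)+1-s) / (s.factorial : ℚ)))
      = (m.factorial : ℚ) * ( ((m:ℚ)+1) * (∑ k ∈ Finset.range (m+1), (-1:ℚ)^k / (k.factorial : ℚ))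
        + (∑ k ∈ Finset.range m, (-1:ℚ)^k / (k.factorial : ℚ)) ) := by
    rw [← Finset.mul_sum]
    congr 1
    have expand : ∀ s ∈ Finset.range (m+1), (-1:ℚ)^s * (((m:ℚ)+1-s) / (s.factorial : ℚ))
        = ((m:ℚ)+1) * ((-1:ℚ)^s / s.factorial) - ((-1:ℚ)^s * s / s.factorial) := by
      intro s _
      field_simp
    rw [Finset.sum_congr rfl expand, Finset.sum_sub_distrib, ← Finset.mul_sum]
    have T : ∑ s ∈ Finset.range (m+1), ((-1:ℚ)^s * s / s.factorial)
        = - ∑ k ∈ Finset.range m, (-1:ℚ)^k / (k.factorial : ℚ) := by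
      rw [Finset.sum_range_succ']
      simp only [Nat.cast_zero, mul_zero, zero_div, add_zero]
      rw [← Finset.sum_neg_distrib]
      apply Finset.sum_congr rfl
      intro i _
      rw [Nat.factorial_succ]
      push_cast
      have : ((i:ℚ)+1) ≠ 0 := by positivity
      field_simp
      ring
    rw [T]
    ring
  rw [stepB]
  -- final rearrangement
  rw [Finset.sum_range_succ (fun k => (-1:ℚ)^k / (k.factorial : ℚ)) (m+1),
    Finset.sum_range_succ (fun k => (-1:ℚ)^k / (k.factorial : ℚ)) m]
  have hfs : ((m+1).factorial : ℚ) = ((m:ℚ)+1) * (m.factorial : ℚ) := by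
    rw [Nat.factorial_succ]; push_cast; ring
  rw [hfs]
  field_simp
  ring

/-- For a uniform random permutation `Π` of `[n]`, the number of `k ∈ [n-1]` with
`Π(k+1) = Π(k)+1` has expectation `(n-1)/n`, and the probability that it is zero is
`Σ_{k=0}^{n}(-1)^k/k! + (1/n)·Σ_{k=0}^{n-1}(-1)^k/k!` (Whitworth's formula). -/
theorem stmt19 (n : ℕ) (hn : 1 ≤ n) :
    (∑ π : Equiv.Perm (Fin n),
        ((Finset.univ.filter (fun k : Fin n =>
          (k : ℕ) + 1 < n ∧ ((π (cyclicSucc k) : ℕ) = (π k : ℕ) + 1))).card : ℚ))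
      / (Nat.factorial n : ℚ) = ((n : ℚ) - 1) / n
    ∧
    ((Finset.univ.filter (fun π : Equiv.Perm (Fin n) =>
        ∀ k : Fin n, (k : ℕ) + 1 < n → ((π (cyclicSucc k) : ℕ) ≠ (π k : ℕ) + 1))).card : ℚ)
      / (Nat.factorial n : ℚ)
    = (∑ k ∈ Finset.range (n + 1), (-1 : ℚ) ^ k / (Nat.factorial k : ℚ))
      + (1 / (n : ℚ)) * ∑ k ∈ Finset.range n, (-1 : ℚ) ^ k / (Nat.factorial k : ℚ) := by
  obtain ⟨m, rfl⟩ : ∃ m, n = m + 1 := ⟨n - 1, by omega⟩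
  have fact_ne : ∀ j : ℕ, ((j.factorial : ℚ)) ≠ 0 := fun j => Nat.cast_ne_zero.mpr j.factorial_ne_zero
  have hm1 : ((m:ℚ) + 1) ≠ 0 := by positivity
  constructor
  · have h1 := part1_sum (n := m+1) (by omega)
    rw [← Nat.cast_sum, h1]
    rw [show m + 1 - 1 = m from rfl]
    rw [Nat.factorial_succ]
    push_cast
    field_simp
    ring
  · have h2 := noSucc_card (m+1) (by omega)
    rw [show m + 1 - 1 = m from rfl] at h2
    have h2q : ((Finset.univ.filter (fun π : Equiv.Perm (Fin (m+1)) =>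
        ∀ k : Fin (m+1), (k : ℕ) + 1 < m+1 → ((π (cyclicSucc k) : ℕ) ≠ (π k : ℕ) + 1))).card : ℚ)
        = ∑ s ∈ Finset.range (m+1), ((m.choose s : ℚ)) * ((-1)^s * ((m+1-s).factorial : ℚ)) := by
      have := congrArg (fun z : ℤ => (z : ℚ)) h2
      push_cast at this ⊢
      convert this using 2
    rw [h2q, alg_lemma m]
    rw [Nat.factorial_succ]
    push_cast
    field_simp
end
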